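/- Let w_1,…,w_d, u > 0, n ∈ ℕ, and z ∈ ℤ^d, and let Λ = S_{w,u} = {h ∈ ℕ₀^d : Σ_j w_j h_j ≤ u}. The following are equivalent: (i) (n,z) is Plan A admissible for Λ; (ii) (n,z) is Plan C admissible for Λ, 2⌊u/w_j⌋ z_j ≢ 0 (mod n) for every j with w_j ≤ u, and h'·z ≢ h·z (mod n) for all h' ≠ h ∈ M(Λ) with ‖h‖_{w,ℓ1} + ‖h'‖_{w,ℓ1} > 2u − α_{h,h'}, where α_{h,h'} = max{w_i : i ∈ supp(h) ∪ supp(h')}. Moreover, if n is odd, the condition 2⌊u/w_j⌋ z_j ≢ 0 (mod n) can be omitted. -/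
import Mathlib


open Pointwise

/-- A set `Λ ⊆ ℕ₀^d` is lower (downward closed). -/
def IsLower {d : ℕ} (Λ : Set (Fin d → ℕ)) : Prop :=
  ∀ k ∈ Λ, ∀ h : Fin d → ℕ, (∀ j, h j ≤ k j) → h ∈ Λ

/-- The mirrored set `M(Λ) = {h ∈ ℤ^d : |h| ∈ Λ}`. -/
def mirror {d : ℕ} (Λ : Set (Fin d → ℕ)) : Set (Fin d → ℤ) :=
  {h | (fun j => (h j).natAbs) ∈ Λ}

/-- Integer dot product. -/
def dotZ {d : ℕ} (h z : Fin d → ℤ) : ℤ := ∑ j, h j * z j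

/-- Cast a multi-index in `ℕ₀^d` to `ℤ^d`. -/
def natCast {d : ℕ} (h : Fin d → ℕ) : Fin d → ℤ := fun j => (h j : ℤ)

/-- `s` is a component-wise sign flip of `h`. -/
def IsSignFlip {d : ℕ} (h : Fin d → ℕ) (s : Fin d → ℤ) : Prop :=
  ∀ j, (s j).natAbs = h j

/-- Plan 0 admissibility: `h·z ≢ 0 (mod n)` for all nonzero `h ∈ M(Λ)`. -/
def Plan0 {d : ℕ} (Λ : Set (Fin d → ℕ)) (n : ℕ) (z : Fin d → ℤ) : Prop :=
  ∀ h ∈ mirror Λ, h ≠ 0 → ¬ (dotZ h z ≡ 0 [ZMOD (n : ℤ)])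

/-- Plan A admissibility: `h·z ≢ h'·z (mod n)` for all distinct `h, h' ∈ M(Λ)`. -/
def PlanA {d : ℕ} (Λ : Set (Fin d → ℕ)) (n : ℕ) (z : Fin d → ℤ) : Prop :=
  ∀ h ∈ mirror Λ, ∀ h' ∈ mirror Λ, h ≠ h' →
    ¬ (dotZ h z ≡ dotZ h' z [ZMOD (n : ℤ)])

/-- Plan B admissibility. -/
def PlanB {d : ℕ} (Λ : Set (Fin d → ℕ)) (n : ℕ) (z : Fin d → ℤ) : Prop :=
  ∀ h ∈ Λ, ∀ h' ∈ Λ, ∀ s : Fin d → ℤ, IsSignFlip h s → s ≠ natCast h' →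
    ¬ (dotZ s z ≡ dotZ (natCast h') z [ZMOD (n : ℤ)])

/-- Plan C admissibility. -/
def PlanC {d : ℕ} (Λ : Set (Fin d → ℕ)) (n : ℕ) (z : Fin d → ℤ) : Prop :=
  ∀ h ∈ Λ, ∀ h' ∈ Λ, h ≠ h' → ∀ s : Fin d → ℤ, IsSignFlip h s →
    ¬ (dotZ s z ≡ dotZ (natCast h') z [ZMOD (n : ℤ)])

/-- The anisotropic simplex set `S_{w,u} = {h ∈ ℕ₀^d : Σ_j w_j h_j ≤ u}`. -/
def simplexW {d : ℕ} (w : Fin d → ℝ) (u : ℝ) : Set (Fin d → ℕ) :=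
  {h | ∑ j, w j * (h j : ℝ) ≤ u}

/-- Weighted ℓ1 norm of an integer vector. -/
noncomputable def wnormZ {d : ℕ} (w : Fin d → ℝ) (h : Fin d → ℤ) : ℝ :=
  ∑ j, w j * |(h j : ℝ)|

/-- `α_{h,h'} = max{w_i : i ∈ supp(h) ∪ supp(h')}`. -/
noncomputable def alphaW {d : ℕ} (w : Fin d → ℝ) (h h' : Fin d → ℤ) : ℝ :=
  sSup {x : ℝ | ∃ i, (h i ≠ 0 ∨ h' i ≠ 0) ∧ x = w i}

/-! ### Auxiliary lemmas -/


lemma dotZ_sub' {d : ℕ} (a b z : Fin d → ℤ) :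
    dotZ a z - dotZ b z = dotZ (fun j => a j - b j) z := by
  simp [dotZ, ← Finset.sum_sub_distrib, sub_mul]

lemma cast_natAbs_real (a : ℤ) : ((a.natAbs : ℕ) : ℝ) = |(a : ℝ)| := by
  rw [Nat.cast_natAbs]; push_cast; ring

lemma wnormZ_eq_natAbs {d : ℕ} (w : Fin d → ℝ) (h : Fin d → ℤ) :
    wnormZ w h = ∑ j, w j * ((h j).natAbs : ℝ) := by
  unfold wnormZ
  exact Finset.sum_congr rfl (fun j _ => by rw [cast_natAbs_real])

lemma mem_mirror_simplex {d : ℕ} (w : Fin d → ℝ) (u : ℝ) (h : Fin d → ℤ) :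
    h ∈ mirror (simplexW w u) ↔ ∑ j, w j * ((h j).natAbs : ℝ) ≤ u := Iff.rfl

lemma alphaW_spec {d : ℕ} (w : Fin d → ℝ) (h h' : Fin d → ℤ)
    (hne : ∃ i, h i ≠ 0 ∨ h' i ≠ 0) :
    (∃ i0, (h i0 ≠ 0 ∨ h' i0 ≠ 0) ∧ alphaW w h h' = w i0) ∧
    (∀ i, (h i ≠ 0 ∨ h' i ≠ 0) → w i ≤ alphaW w h h') := by
  set S := {x : ℝ | ∃ i, (h i ≠ 0 ∨ h' i ≠ 0) ∧ x = w i} with hS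
  have hfin : S.Finite := Set.Finite.subset (Set.finite_range w)
    (by rintro x ⟨i, _, rfl⟩; exact ⟨i, rfl⟩)
  obtain ⟨i, hi⟩ := hne
  have hne' : S.Nonempty := ⟨w i, i, hi, rfl⟩
  have hmem : sSup S ∈ S := hne'.csSup_mem hfin
  obtain ⟨i0, hi0, heq⟩ := hmem
  exact ⟨⟨i0, hi0, heq⟩, fun i hi => le_csSup hfin.bddAbove ⟨i, hi, rfl⟩⟩

lemma exists_split {d : ℕ} (w : Fin d → ℝ) (A L U : ℝ)
    (hLU : L + A ≤ U) (hU : 0 ≤ U) :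
    ∀ N : ℕ, ∀ c : Fin d → ℕ, (∑ j, c j ≤ N) → (∀ j, c j ≠ 0 → w j ≤ A) →
    (L ≤ ∑ j, w j * (c j : ℝ)) →
    ∃ t : Fin d → ℕ, (∀ j, t j ≤ c j) ∧ L ≤ ∑ j, w j * (t j : ℝ) ∧ ∑ j, w j * (t j : ℝ) ≤ U := by
  intro N
  induction N with
  | zero =>
    intro c hcN _ hLC
    refine ⟨c, fun j => le_rfl, hLC, ?_⟩
    have : ∀ j, c j = 0 := fun j => Nat.eq_zero_of_le_zero (le_trans
      (Finset.single_le_sum (f := fun j => c j) (fun j _ => Nat.zero_le _) (Finset.mem_univ j)) hcN)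
    simp [this]; exact hU
  | succ N ih =>
    intro c hcN hcA hLC
    by_cases hC : ∑ j, w j * (c j : ℝ) ≤ U
    · exact ⟨c, fun j => le_rfl, hLC, hC⟩
    push_neg at hC
    have hpos : 0 < ∑ j, w j * (c j : ℝ) := lt_of_le_of_lt hU hC
    have hex : ∃ j, c j ≠ 0 := by
      by_contra hno
      push_neg at hno
      simp [hno] at hpos
    obtain ⟨j0, hj0⟩ := hex
    set c' : Fin d → ℕ := Function.update c j0 (c j0 - 1) with hc'
    have hc'j0 : c' j0 = c j0 - 1 := Function.update_self _ _ _
    have hc'ne : ∀ j, j ≠ j0 → c' j = c j := fun j hj => Function.update_of_ne hj _ _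
    have hsum' : ∑ j, w j * (c' j : ℝ) = (∑ j, w j * (c j : ℝ)) - w j0 := by
      have hterm : ∀ j, w j * (c j : ℝ) - w j * (c' j : ℝ) = if j = j0 then w j0 else 0 := by
        intro j
        by_cases hj : j = j0
        · subst hj
          rw [hc'j0, if_pos rfl]
          have : ((c j - 1 : ℕ) : ℝ) = (c j : ℝ) - 1 := by
            have := Nat.one_le_iff_ne_zero.mpr hj0
            push_cast [Nat.cast_sub this]
            ring
          rw [this]; ring
        · rw [hc'ne j hj, if_neg hj]; ring
      have := Finset.sum_congr rfl (fun j (_ : j ∈ Finset.univ) => hterm j)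
      rw [Finset.sum_sub_distrib] at this
      rw [Finset.sum_ite_eq' Finset.univ j0 (fun _ => w j0)] at this
      simp at this
      linarith
    have hsumN : ∑ j, c' j ≤ N := by
      have h1 : ∑ j, c' j + 1 = ∑ j, c j := by
        have hterm : ∀ j, c j = c' j + (if j = j0 then 1 else 0) := by
          intro j
          by_cases hj : j = j0
          · subst hj; rw [hc'j0, if_pos rfl]; omega
          · rw [hc'ne j hj, if_neg hj]; ring
        rw [Finset.sum_congr rfl (fun j _ => hterm j), Finset.sum_add_distrib,
          Finset.sum_ite_eq' Finset.univ j0 (fun _ => 1)]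
        simp
      omega
    have hcA' : ∀ j, c' j ≠ 0 → w j ≤ A := by
      intro j hj
      apply hcA
      by_cases h : j = j0
      · subst h; omega
      · rwa [← hc'ne j h]
    have hLC' : L ≤ ∑ j, w j * (c' j : ℝ) := by
      rw [hsum']
      have hwA : w j0 ≤ A := hcA j0 hj0
      linarith
    obtain ⟨t, ht1, ht2, ht3⟩ := ih c' hsumN hcA' hLC'
    refine ⟨t, fun j => ?_, ht2, ht3⟩
    by_cases h : j = j0
    · subst h; have := ht1 j; omega
    · rw [← hc'ne j h]; exact ht1 j

lemma sum_update_real {d : ℕ} (w : Fin d → ℝ) (t : Fin d → ℕ) (i : Fin d) (v : ℕ) :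
    ∑ j, w j * ((Function.update t i v) j : ℝ)
      = ∑ j, w j * (t j : ℝ) - w i * (t i : ℝ) + w i * (v : ℝ) := by
  rw [← Finset.sum_erase_add _ _ (Finset.mem_univ i),
    ← Finset.sum_erase_add _ (fun j => w j * (t j : ℝ)) (Finset.mem_univ i)]
  rw [Function.update_self]
  rw [Finset.sum_congr rfl
    (fun j hj => by rw [Function.update_of_ne (Finset.ne_of_mem_erase hj)])]
  ring

lemma core {d : ℕ} (w : Fin d → ℝ) (hw : ∀ j, 0 < w j) (u : ℝ) (hu : 0 < u)
    (n : ℕ) (z : Fin d → ℤ)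
    (hC : PlanC (simplexW w u) n z)
    (hsc : ∀ i : Fin d, ∀ m : ℕ, 1 ≤ m → w i * m ≤ u → u < w i * (m + 1) →
          ¬ ((n : ℤ) ∣ 2 * (m : ℤ) * z i))
    (A : ℝ) (hApos : 0 < A)
    (g : Fin d → ℤ) (hgz : (n : ℤ) ∣ dotZ g z) (hgne : g ≠ 0)
    (hsupp : ∀ j, g j ≠ 0 → w j ≤ A)
    (hWg : ∑ j, w j * ((g j).natAbs : ℝ) ≤ 2 * u - A)
    (hneg : ∑ j, w j * ((g j : ℤ) : ℝ) ≤ 0) : False := by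
  set Wg := ∑ j, w j * ((g j).natAbs : ℝ) with hWgdef
  set c : Fin d → ℕ := fun j => (-(g j)).toNat with hcdef
  have hc_le : ∀ j, c j ≤ (g j).natAbs := by
    intro j
    have : c j = (-(g j)).toNat := rfl
    omega
  have hc_ne : ∀ j, c j ≠ 0 → g j ≠ 0 := by
    intro j
    have : c j = (-(g j)).toNat := rfl
    omega
  -- signed sum identity : (g j : ℝ) = natAbs - 2 c
  have hsigned : ∀ j, ((g j : ℤ) : ℝ) = ((g j).natAbs : ℝ) - 2 * (c j : ℝ) := by
    intro j
    have hz : (g j : ℤ) = ((g j).natAbs : ℤ) - 2 * ((c j : ℕ) : ℤ) := by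
      have : c j = (-(g j)).toNat := rfl
      omega
    exact_mod_cast congrArg (fun x : ℤ => (x : ℝ)) hz
  have hsumc : Wg - 2 * (∑ j, w j * (c j : ℝ)) ≤ 0 := by
    have heq2 : ∑ j, w j * ((g j : ℤ) : ℝ)
        = ∑ j, (w j * ((g j).natAbs : ℝ) - 2 * (w j * (c j : ℝ))) :=
      Finset.sum_congr rfl (fun j _ => by rw [hsigned j]; ring)
    rw [Finset.sum_sub_distrib, ← Finset.mul_sum] at heq2
    rw [hWgdef]
    linarith [hneg, heq2]
  -- greedy split
  obtain ⟨t, ht1, ht2, ht3⟩ := exists_split w A (Wg - u) u (by linarith) hu.le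
    (∑ j, c j) c le_rfl (fun j hj => hsupp j (hc_ne j hj)) (by linarith)
  -- the kill lemma: any valid split contradicts PlanC
  have kill : ∀ t' : Fin d → ℕ, (∀ j, t' j ≤ c j) → (Wg - u ≤ ∑ j, w j * (t' j : ℝ)) →
      (∑ j, w j * (t' j : ℝ) ≤ u) → (∃ j, (g j).natAbs ≠ 2 * t' j) → False := by
    rintro t' htc htL htU ⟨j1, hj1⟩
    set s : Fin d → ℤ := fun j => g j + (t' j : ℤ) with hsdef
    have habs : ∀ j, (s j).natAbs = (g j).natAbs - t' j := by
      intro j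
      have h1 : t' j ≤ c j := htc j
      have h2 : c j = (-(g j)).toNat := rfl
      have h3 : s j = g j + (t' j : ℤ) := rfl
      omega
    have hcast : ∀ j, (((g j).natAbs - t' j : ℕ) : ℝ) = ((g j).natAbs : ℝ) - (t' j : ℝ) := by
      intro j
      have hle : t' j ≤ (g j).natAbs := le_trans (htc j) (hc_le j)
      push_cast [Nat.cast_sub hle]
      ring
    have mem1 : (fun j => (s j).natAbs) ∈ simplexW w u := by
      simp only [simplexW, Set.mem_setOf_eq]
      have : ∑ j, w j * (((s j).natAbs : ℕ) : ℝ)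
          = Wg - ∑ j, w j * (t' j : ℝ) := by
        rw [hWgdef, ← Finset.sum_sub_distrib]
        refine Finset.sum_congr rfl (fun j _ => ?_)
        rw [habs j, hcast j]
        ring
      rw [this]
      linarith
    have mem2 : t' ∈ simplexW w u := by
      simp only [simplexW, Set.mem_setOf_eq]
      exact htU
    have hneq : (fun j => (s j).natAbs) ≠ t' := by
      intro hEq
      have := congrFun hEq j1
      rw [habs j1] at this
      have h1 : t' j1 ≤ (g j1).natAbs := le_trans (htc j1) (hc_le j1)
      omega
    have hflip : IsSignFlip (fun j => (s j).natAbs) s := fun j => rfl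
    have hmod : dotZ s z ≡ dotZ (natCast t') z [ZMOD (n : ℤ)] := by
      rw [Int.modEq_iff_dvd]
      have hdiff : dotZ s z - dotZ (natCast t') z = dotZ g z := by
        rw [dotZ_sub']
        congr 1
        funext j
        show g j + (t' j : ℤ) - (t' j : ℤ) = g j
        ring
      have : dotZ (natCast t') z - dotZ s z = -(dotZ g z) := by linarith [hdiff]
      rw [this]
      exact dvd_neg.mpr hgz
    exact hC _ mem1 t' mem2 hneq s hflip hmod
  -- if distinctness holds for greedy t, done
  by_cases hex : ∃ j, (g j).natAbs ≠ 2 * t j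
  · exact kill t ht1 ht2 ht3 hex
  push_neg at hex
  -- even case : g ≤ 0, c = 2t
  have hct : ∀ j, c j = 2 * t j ∧ g j ≤ 0 := by
    intro j
    have h1 : t j ≤ c j := ht1 j
    have h2 : c j = (-(g j)).toNat := rfl
    have h3 : (g j).natAbs = 2 * t j := hex j
    omega
  set T := ∑ j, w j * (t j : ℝ) with hTdef
  have hT2 : Wg = 2 * T := by
    rw [hWgdef, hTdef, Finset.mul_sum]
    refine Finset.sum_congr rfl (fun j _ => ?_)
    have h3 : (g j).natAbs = 2 * t j := hex j
    rw [h3]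
    push_cast
    ring
  have hTu : T ≤ u := ht3
  have hbad : ∀ i, t i ≠ 0 → u < T + w i := by
    intro i hti
    by_contra hcon
    push_neg at hcon
    set t' := Function.update t i (t i + 1) with ht'def
    have hsum' : ∑ j, w j * (t' j : ℝ) = T + w i := by
      rw [ht'def, sum_update_real]
      push_cast
      ring
    refine kill t' ?_ (by rw [hsum']; linarith [hw i, hT2]) (by rw [hsum']; exact hcon) ?_
    · intro j
      by_cases hj : j = i
      · subst hj
        rw [ht'def, Function.update_self, (hct j).1]
        omega
      · rw [ht'def, Function.update_of_ne hj]
        exact ht1 j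
    · refine ⟨i, ?_⟩
      rw [ht'def, Function.update_self, hex i]
      omega
  obtain ⟨j2, hj2⟩ := Function.ne_iff.mp hgne
  have htj2 : t j2 ≠ 0 := by
    have h3 : (g j2).natAbs = 2 * t j2 := hex j2
    simp only [Pi.zero_apply] at hj2
    omega
  by_cases htwo : ∃ i2, i2 ≠ j2 ∧ t i2 ≠ 0
  · -- two active components
    obtain ⟨i2, hi2ne, hti2⟩ := htwo
    set t'' := Function.update (Function.update t j2 (t j2 + 1)) i2 (t i2 - 1) with ht''def
    have hmid : Function.update t j2 (t j2 + 1) i2 = t i2 :=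
      Function.update_of_ne hi2ne _ _
    have hsum'' : ∑ j, w j * (t'' j : ℝ) = T + w j2 - w i2 := by
      rw [ht''def, sum_update_real, sum_update_real, hmid]
      have : ((t i2 - 1 : ℕ) : ℝ) = (t i2 : ℝ) - 1 := by
        have := Nat.one_le_iff_ne_zero.mpr hti2
        push_cast [Nat.cast_sub this]
        ring
      rw [this]
      push_cast
      ring
    have hb1 : u < T + w j2 := hbad j2 htj2
    have hb2 : u < T + w i2 := hbad i2 hti2
    have hA1 : w j2 ≤ A := hsupp j2 hj2
    have hA2 : w i2 ≤ A := by
      apply hsupp i2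
      have h3 : (g i2).natAbs = 2 * t i2 := hex i2
      omega
    refine kill t'' ?_ ?_ ?_ ?_
    · intro j
      by_cases hja : j = i2
      · subst hja
        rw [ht''def, Function.update_self]
        have := ht1 j
        omega
      · rw [ht''def, Function.update_of_ne hja]
        by_cases hjb : j = j2
        · subst hjb
          rw [Function.update_self, (hct j).1]
          omega
        · rw [Function.update_of_ne hjb]
          exact ht1 j
    · rw [hsum'']
      linarith
    · rw [hsum'']
      linarith
    · refine ⟨j2, ?_⟩
      rw [ht''def, Function.update_of_ne (Ne.symm hi2ne), Function.update_self, hex j2]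
      omega
  · -- single active component j2
    push_neg at htwo
    have hTsingle : T = w j2 * (t j2 : ℝ) := by
      rw [hTdef, Finset.sum_eq_single j2]
      · intro b _ hb
        rw [htwo b hb]
        simp
      · intro habsurd
        exact absurd (Finset.mem_univ j2) habsurd
    have hgz2 : ∀ j, j ≠ j2 → g j = 0 := by
      intro j hj
      have h3 : (g j).natAbs = 2 * t j := hex j
      rw [htwo j hj] at h3
      omega
    have hgj2 : g j2 = -(2 * (t j2 : ℤ)) := by
      have h3 : (g j2).natAbs = 2 * t j2 := hex j2
      have h4 : g j2 ≤ 0 := (hct j2).2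
      omega
    have hdot : dotZ g z = -(2 * (t j2 : ℤ) * z j2) := by
      rw [dotZ, Finset.sum_eq_single j2]
      · rw [hgj2]; ring
      · intro b _ hb
        rw [hgz2 b hb]
        ring
      · intro habsurd
        exact absurd (Finset.mem_univ j2) habsurd
    apply hsc j2 (t j2) (Nat.one_le_iff_ne_zero.mpr htj2)
    · rw [← hTsingle]; exact hTu
    · have := hbad j2 htj2
      rw [hTsingle] at this
      linarith
    · rw [hdot] at hgz
      exact (dvd_neg.mp hgz)

lemma backward {d : ℕ} (w : Fin d → ℝ) (hw : ∀ j, 0 < w j) (u : ℝ) (hu : 0 < u)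
    (n : ℕ) (z : Fin d → ℤ)
    (hC : PlanC (simplexW w u) n z)
    (h3 : ∀ h ∈ mirror (simplexW w u), ∀ h' ∈ mirror (simplexW w u), h' ≠ h →
          wnormZ w h + wnormZ w h' > 2 * u - alphaW w h h' →
          ¬ (dotZ h' z ≡ dotZ h z [ZMOD (n : ℤ)]))
    (hsc : ∀ i : Fin d, ∀ m : ℕ, 1 ≤ m → w i * m ≤ u → u < w i * (m + 1) →
          ¬ ((n : ℤ) ∣ 2 * (m : ℤ) * z i)) :
    PlanA (simplexW w u) n z := by
  intro h hh h' hh' hne heq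
  have hsuppne : ∃ i, h i ≠ 0 ∨ h' i ≠ 0 := by
    by_contra hno
    push_neg at hno
    exact hne (funext fun j => by rw [(hno j).1, (hno j).2])
  obtain ⟨⟨i0, hi0supp, hi0eq⟩, hub⟩ := alphaW_spec w h h' hsuppne
  set A := alphaW w h h' with hAdef
  have hApos : 0 < A := hi0eq ▸ hw i0
  by_cases hbig : wnormZ w h + wnormZ w h' > 2 * u - A
  · exact h3 h hh h' hh' hne.symm hbig heq.symm
  push_neg at hbig
  set g1 : Fin d → ℤ := fun j => h' j - h j with hg1def
  have hdvd1 : (n : ℤ) ∣ dotZ g1 z := by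
    have := heq.dvd
    rwa [dotZ_sub'] at this
  have hg1ne : g1 ≠ 0 := by
    intro hEq
    apply hne
    funext j
    have := congrFun hEq j
    simp only [hg1def, Pi.zero_apply] at this
    omega
  have hg1supp : ∀ j, g1 j ≠ 0 → w j ≤ A := by
    intro j hj
    apply hub
    simp only [hg1def] at hj
    omega
  have hWg1 : ∑ j, w j * ((g1 j).natAbs : ℝ) ≤ 2 * u - A := by
    refine le_trans ?_ hbig
    rw [wnormZ_eq_natAbs, wnormZ_eq_natAbs, ← Finset.sum_add_distrib]
    refine Finset.sum_le_sum (fun j _ => ?_)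
    have htri : (g1 j).natAbs ≤ (h j).natAbs + (h' j).natAbs := by
      simp only [hg1def]
      omega
    have : ((g1 j).natAbs : ℝ) ≤ ((h j).natAbs : ℝ) + ((h' j).natAbs : ℝ) := by
      exact_mod_cast htri
    nlinarith [(hw j).le]
  by_cases hsign : ∑ j, w j * ((g1 j : ℤ) : ℝ) ≤ 0
  · exact core w hw u hu n z hC hsc A hApos g1 hdvd1 hg1ne hg1supp hWg1 hsign
  · push_neg at hsign
    set g2 : Fin d → ℤ := fun j => h j - h' j with hg2def
    have hdvd2 : (n : ℤ) ∣ dotZ g2 z := by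
      have := heq.symm.dvd
      rwa [dotZ_sub'] at this
    have hg2g1 : ∀ j, g2 j = -(g1 j) := fun j => by simp only [hg2def, hg1def]; ring
    have hg2ne : g2 ≠ 0 := by
      intro hEq
      apply hg1ne
      funext j
      have := congrFun hEq j
      rw [hg2g1 j] at this
      simp only [Pi.zero_apply] at this ⊢
      omega
    have hg2supp : ∀ j, g2 j ≠ 0 → w j ≤ A := by
      intro j hj
      apply hg1supp
      rw [hg2g1 j] at hj
      omega
    have habs12 : ∀ j, (g2 j).natAbs = (g1 j).natAbs := fun j => by
      rw [hg2g1 j]; omega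
    have hWg2 : ∑ j, w j * ((g2 j).natAbs : ℝ) ≤ 2 * u - A := by
      refine le_trans (le_of_eq (Finset.sum_congr rfl (fun j _ => by rw [habs12 j]))) hWg1
    have hsign2 : ∑ j, w j * ((g2 j : ℤ) : ℝ) ≤ 0 := by
      have : ∑ j, w j * ((g2 j : ℤ) : ℝ) = -(∑ j, w j * ((g1 j : ℤ) : ℝ)) := by
        rw [← Finset.sum_neg_distrib]
        refine Finset.sum_congr rfl (fun j _ => ?_)
        rw [hg2g1 j]
        push_cast
        ring
      rw [this]
      linarith
    exact core w hw u hu n z hC hsc A hApos g2 hdvd2 hg2ne hg2supp hWg2 hsign2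

lemma hsc_of_floor {d : ℕ} (w : Fin d → ℝ) (hw : ∀ j, 0 < w j) (u : ℝ)
    (n : ℕ) (z : Fin d → ℤ)
    (hfl : ∀ j : Fin d, w j ≤ u → ¬ ((2 * ⌊u / w j⌋ * z j) ≡ 0 [ZMOD (n : ℤ)])) :
    ∀ i : Fin d, ∀ m : ℕ, 1 ≤ m → w i * m ≤ u → u < w i * (m + 1) →
      ¬ ((n : ℤ) ∣ 2 * (m : ℤ) * z i) := by
  intro i m hm h1 h2 hdvd
  have hm1 : (1 : ℝ) ≤ (m : ℝ) := by exact_mod_cast hm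
  have hwi : w i ≤ u := le_trans (by nlinarith [hw i]) h1
  have hfloor : ⌊u / w i⌋ = (m : ℤ) := by
    rw [Int.floor_eq_iff]
    constructor
    · rw [le_div_iff₀ (hw i)]
      push_cast
      linarith
    · rw [div_lt_iff₀ (hw i)]
      push_cast
      linarith
  apply hfl i hwi
  rw [hfloor, Int.modEq_zero_iff_dvd]
  exact hdvd

lemma hsc_of_odd {d : ℕ} (w : Fin d → ℝ) (hw : ∀ j, 0 < w j) (u : ℝ) (hu : 0 < u)
    (n : ℕ) (z : Fin d → ℤ) (hodd : Odd n) (hC : PlanC (simplexW w u) n z) :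
    ∀ i : Fin d, ∀ m : ℕ, 1 ≤ m → w i * m ≤ u → u < w i * (m + 1) →
      ¬ ((n : ℤ) ∣ 2 * (m : ℤ) * z i) := by
  intro i m hm h1 h2 hdvd
  have hcop : IsCoprime (n : ℤ) (2 : ℤ) := by
    have := Nat.isCoprime_iff_coprime.mpr (Nat.coprime_two_right.mpr hodd)
    exact_mod_cast this
  have hdvd' : (n : ℤ) ∣ (m : ℤ) * z i := by
    apply hcop.dvd_of_dvd_mul_left
    have : (2 : ℤ) * ((m : ℤ) * z i) = 2 * (m : ℤ) * z i := by ring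
    rw [this]
    exact hdvd
  set e : Fin d → ℕ := fun k => if k = i then m else 0 with hedef
  have he : e ∈ simplexW w u := by
    simp only [simplexW, Set.mem_setOf_eq]
    rw [Finset.sum_eq_single i]
    · simp only [hedef, if_pos rfl]
      exact h1
    · intro b _ hb
      simp only [hedef, if_neg hb]
      simp
    · intro habs
      exact absurd (Finset.mem_univ i) habs
  have h0mem : (0 : Fin d → ℕ) ∈ simplexW w u := by
    simp only [simplexW, Set.mem_setOf_eq]
    simp
    linarith
  have hne0 : e ≠ 0 := by
    intro hEq
    have := congrFun hEq i
    simp only [hedef, if_pos rfl, Pi.zero_apply] at this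
    omega
  have hflip : IsSignFlip e (natCast e) := fun j => Int.natAbs_natCast _
  apply hC e he 0 h0mem hne0 (natCast e) hflip
  have he1 : dotZ (natCast e) z = (m : ℤ) * z i := by
    rw [dotZ, Finset.sum_eq_single i]
    · simp only [natCast, hedef, if_pos rfl]
    · intro b _ hb
      simp only [natCast, hedef, if_neg hb]
      simp
    · intro habs
      exact absurd (Finset.mem_univ i) habs
  have he0 : dotZ (natCast (0 : Fin d → ℕ)) z = 0 := by
    simp [dotZ, natCast]
  rw [Int.modEq_iff_dvd, he1, he0, zero_sub]
  exact dvd_neg.mpr hdvd'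

lemma planA_to_planC {d : ℕ} (Λ : Set (Fin d → ℕ)) (n : ℕ) (z : Fin d → ℤ)
    (hA : PlanA Λ n z) : PlanC Λ n z := by
  intro a ha a' ha' hne s hs
  have hmem : s ∈ mirror Λ := by
    show (fun j => (s j).natAbs) ∈ Λ
    have : (fun j => (s j).natAbs) = a := funext hs
    rw [this]; exact ha
  have hmem' : natCast a' ∈ mirror Λ := by
    show (fun j => ((natCast a') j).natAbs) ∈ Λ
    have : (fun j => ((natCast a') j).natAbs) = a' := funext (fun j => Int.natAbs_natCast _)
    rw [this]; exact ha'
  have hsne : s ≠ natCast a' := by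
    intro hEq
    apply hne
    funext j
    rw [← hs j, hEq]
    exact Int.natAbs_natCast _
  exact hA s hmem (natCast a') hmem' hsne

lemma planA_floor {d : ℕ} (w : Fin d → ℝ) (hw : ∀ j, 0 < w j) (u : ℝ)
    (n : ℕ) (z : Fin d → ℤ) (hA : PlanA (simplexW w u) n z) :
    ∀ j : Fin d, w j ≤ u → ¬ ((2 * ⌊u / w j⌋ * z j) ≡ 0 [ZMOD (n : ℤ)]) := by
  intro j hwj hcon
  set m : ℤ := ⌊u / w j⌋ with hm
  have hm1 : 1 ≤ m := by
    rw [hm, Int.le_floor]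
    push_cast
    rw [le_div_iff₀ (hw j)]
    linarith
  have hmle : (m : ℝ) ≤ u / w j := Int.floor_le _
  set e : Fin d → ℤ := fun k => if k = j then m else 0 with hedef
  set e' : Fin d → ℤ := fun k => -(e k) with he'def
  have habs : ∀ k, (e' k).natAbs = (e k).natAbs := by
    intro k
    simp only [he'def, Int.natAbs_neg]
  have hmemsum : ∑ k, w k * ((e k).natAbs : ℝ) ≤ u := by
    rw [Finset.sum_eq_single j]
    · simp only [hedef, if_pos rfl]
      have : ((m.natAbs : ℕ) : ℝ) = (m : ℝ) := by
        have h0 : |m| = m := abs_of_nonneg (by omega)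
        rw [Nat.cast_natAbs, h0]
      rw [this]
      calc w j * (m : ℝ) ≤ w j * (u / w j) := by
            apply mul_le_mul_of_nonneg_left hmle (hw j).le
        _ = u := by
            rw [mul_div_cancel₀ u (ne_of_gt (hw j))]
    · intro b _ hb
      simp only [hedef, if_neg hb]
      simp
    · intro habs
      exact absurd (Finset.mem_univ j) habs
  have hmem : e ∈ mirror (simplexW w u) := hmemsum
  have hmem' : e' ∈ mirror (simplexW w u) := by
    show ∑ k, w k * ((e' k).natAbs : ℝ) ≤ u
    rw [Finset.sum_congr rfl (fun k _ => by rw [habs k])]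
    exact hmemsum
  have hneq : e ≠ e' := by
    intro hEq
    have := congrFun hEq j
    simp only [hedef, he'def, if_pos rfl] at this
    omega
  apply hA e hmem e' hmem' hneq
  have hde : dotZ e z = m * z j := by
    rw [dotZ, Finset.sum_eq_single j]
    · simp only [hedef, if_pos rfl]
    · intro b _ hb
      simp only [hedef, if_neg hb]
      simp
    · intro habs
      exact absurd (Finset.mem_univ j) habs
  have hde' : dotZ e' z = -(m * z j) := by
    rw [dotZ, Finset.sum_eq_single j]
    · have hej : e' j = -m := by simp [he'def, hedef]
      rw [hej]
      ring
    · intro b _ hb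
      simp only [he'def, hedef, if_neg hb]
      simp
    · intro habs
      exact absurd (Finset.mem_univ j) habs
  rw [Int.modEq_iff_dvd, hde, hde']
  have hd : (n : ℤ) ∣ 2 * m * z j := Int.modEq_zero_iff_dvd.mp hcon
  have : -(m * z j) - m * z j = -(2 * m * z j) := by ring
  rw [this]
  exact dvd_neg.mpr hd


theorem anisotropic_simplex_planA_iff {d : ℕ} (w : Fin d → ℝ) (hw : ∀ j, 0 < w j)
    (u : ℝ) (hu : 0 < u) (n : ℕ) (hn : 1 ≤ n) (z : Fin d → ℤ) :
    (PlanA (simplexW w u) n z ↔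
      (PlanC (simplexW w u) n z ∧
        (∀ j : Fin d, w j ≤ u → ¬ ((2 * ⌊u / w j⌋ * z j) ≡ 0 [ZMOD (n : ℤ)])) ∧
        (∀ h ∈ mirror (simplexW w u), ∀ h' ∈ mirror (simplexW w u), h' ≠ h →
          wnormZ w h + wnormZ w h' > 2 * u - alphaW w h h' →
          ¬ (dotZ h' z ≡ dotZ h z [ZMOD (n : ℤ)])))) ∧
    (Odd n → (PlanA (simplexW w u) n z ↔
      (PlanC (simplexW w u) n z ∧
        (∀ h ∈ mirror (simplexW w u), ∀ h' ∈ mirror (simplexW w u), h' ≠ h →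
          wnormZ w h + wnormZ w h' > 2 * u - alphaW w h h' →
          ¬ (dotZ h' z ≡ dotZ h z [ZMOD (n : ℤ)]))))) := by

  constructor
  · constructor
    · intro hA
      exact ⟨planA_to_planC _ _ _ hA, planA_floor w hw u n z hA,
        fun h hh h' hh' hne _ => hA h' hh' h hh hne⟩
    · rintro ⟨hC, hfl, h3⟩
      exact backward w hw u hu n z hC h3 (hsc_of_floor w hw u n z hfl)
  · intro hodd
    constructor
    · intro hA
      exact ⟨planA_to_planC _ _ _ hA, fun h hh h' hh' hne _ => hA h' hh' h hh hne⟩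
    · rintro ⟨hC, h3⟩
      exact backward w hw u hu n z hC h3 (hsc_of_odd w hw u hu n z hodd hC)
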